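/- In the 5-agent, 7-good instance with desired sets R_1 = {1,2,7}, R_2 = {3,4,7}, R_3 = {5,6,7}, R'_4 = {1,3,5,7}, R_5 = {2,4,6}, supplies s_7 = 2 and s_j = 1 for j ≠ 7 (utility profile u'): for every ρ ∈ (-∞, 1] (with ρ = 0 interpreted as Nash welfare), every allocation x' ∈ Ψ_ρ(u') satisfies u'_i(x'_i) = 1/2 for all agents i; in particular, min_{j ∈ {1,3,5}} x'_{4j} ≥ 1/2. -/

import Mathlib

open scoped Classical
open Real

namespace BandwidthAlloc

/-- A bid: `none` denotes the special bid β; `some r` denotes the real bid `r ≥ 0`. -/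
abbrev Bid := Option NNReal

/-- Numeric value of a bid (β is treated as 0 in arithmetic). -/
noncomputable def bval (b : Bid) : ℝ := ((b.getD 0 : NNReal) : ℝ)

/-- A bid is positive when it is neither 0 nor β. -/
def posBid (b : Bid) : Prop := 0 < bval b

/-- Utility of the bundle `xi` for an agent with desired set `Ri`: `min_{j ∈ Ri} xi j`. -/
noncomputable def bundleUtil {m : ℕ} (Ri : Finset (Fin m)) (xi : Fin m → ℝ) : ℝ :=
  sInf (xi '' (Ri : Set (Fin m)))

/-- Bandwidth-allocation utility of agent `i` under allocation `x`. -/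
noncomputable def util {n m : ℕ} (R : Fin n → Finset (Fin m))
    (x : Fin n → Fin m → ℝ) (i : Fin n) : ℝ :=
  bundleUtil (R i) (x i)

/-- Weights: `w R i j = 1` iff `j ∈ R i`, else `0`. -/
noncomputable def w {n m : ℕ} (R : Fin n → Finset (Fin m)) (i : Fin n) (j : Fin m) : ℝ :=
  if j ∈ R i then 1 else 0

/-- A valid (nonnegative, supply-respecting) allocation. -/
def validAlloc {n m : ℕ} (s : Fin m → ℝ) (x : Fin n → Fin m → ℝ) : Prop :=
  (∀ i j, 0 ≤ x i j) ∧ ∀ j, ∑ i, x i j ≤ s j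

/-- CES welfare of the utility vector `v` (`ρ = 0` is Nash welfare; for `ρ < 0` a zero
utility yields welfare `0`, the limiting convention). -/
noncomputable def ces (ρ : ℝ) {n : ℕ} (v : Fin n → ℝ) : ℝ :=
  if ρ = 0 then ∏ i, v i
  else if ρ < 0 ∧ ∃ i, v i = 0 then 0
  else (∑ i, v i ^ ρ) ^ (1 / ρ)

/-- `Ψ_ρ`: `x` is a valid allocation maximizing CES welfare among valid allocations. -/
def maxCES (ρ : ℝ) {n m : ℕ} (s : Fin m → ℝ) (R : Fin n → Finset (Fin m))
    (x : Fin n → Fin m → ℝ) : Prop :=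
  validAlloc s x ∧ ∀ y, validAlloc s y → ces ρ (util R y) ≤ ces ρ (util R x)

/-- Constraint curve: continuous, normalized, strictly increasing, nonnegative on `[0,∞)`. -/
def IsConstraintCurve (f : ℝ → ℝ) : Prop :=
  ContinuousOn f (Set.Ici 0) ∧ f 0 = 0 ∧ StrictMonoOn f (Set.Ici 0) ∧
    ∀ y ∈ Set.Ici (0 : ℝ), 0 ≤ f y

/-- `g` is identically zero on `[0,∞)`. -/
def zeroOn (g : ℝ → ℝ) : Prop := ∀ y ∈ Set.Ici (0 : ℝ), g y = 0

/-- Price curve: continuous, normalized, nonnegative, and either strictly increasing or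
identically zero on `[0,∞)`. -/
def IsPriceCurve (g : ℝ → ℝ) : Prop :=
  ContinuousOn g (Set.Ici 0) ∧ g 0 = 0 ∧ (∀ y ∈ Set.Ici (0 : ℝ), 0 ≤ g y) ∧
    (StrictMonoOn g (Set.Ici 0) ∨ zeroOn g)

/-- Cost of the bundle `xi` under price curves `g`. -/
noncomputable def cost {m : ℕ} (g : Fin m → ℝ → ℝ) (xi : Fin m → ℝ) : ℝ :=
  ∑ j, g j (xi j)

/-- `xi` is in the demand set of an agent with desired set `Ri` under price curves `g`. -/
def inDemand {m : ℕ} (g : Fin m → ℝ → ℝ) (Ri : Finset (Fin m)) (xi : Fin m → ℝ) : Prop :=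
  (∀ j, 0 ≤ xi j) ∧ cost g xi ≤ 1 ∧
    ∀ yi : Fin m → ℝ, (∀ j, 0 ≤ yi j) → cost g yi ≤ 1 → bundleUtil Ri yi ≤ bundleUtil Ri xi

/-- Price curve equilibrium. -/
def isPCE {n m : ℕ} (s : Fin m → ℝ) (R : Fin n → Finset (Fin m))
    (x : Fin n → Fin m → ℝ) (g : Fin m → ℝ → ℝ) : Prop :=
  (∀ i, inDemand g (R i) (x i)) ∧ (∀ j, ∑ i, x i j ≤ s j) ∧
    ∀ j, ¬ zeroOn (g j) → ∑ i, x i j = s j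

/-- Step 1 of the ATP allocation rule: proportional sharing. -/
noncomputable def atp1 {n m : ℕ} (s : Fin m → ℝ) (b : Fin n → Fin m → Bid)
    (i : Fin n) (j : Fin m) : ℝ :=
  bval (b i j) / (∑ k, bval (b k j)) * s j

/-- Steps 1–2 of the ATP allocation rule: goods with a positive bid are shared
proportionally; on a good where everyone bids `0` or `β`, an agent bidding `β` receives
as much as she receives of some fixed good on which she bids positively. -/
noncomputable def atp2 {n m : ℕ} (s : Fin m → ℝ) (b : Fin n → Fin m → Bid)
    (i : Fin n) (j : Fin m) : ℝ :=
  if ∃ k, posBid (b k j) then atp1 s b i j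
  else if b i j = none then
    (if h : ∃ ℓ, posBid (b i ℓ) then atp1 s b i (Classical.choose h) else 0)
  else 0

/-- The full ATP allocation rule (steps 1–3): agents bidding `β` on an oversubscribed
step-2 good are penalized with the zero bundle. -/
noncomputable def atp {n m : ℕ} (s : Fin m → ℝ) (b : Fin n → Fin m → Bid)
    (i : Fin n) (j : Fin m) : ℝ :=
  if ∃ ℓ, (¬ ∃ k, posBid (b k ℓ)) ∧ b i ℓ = none ∧ s ℓ < ∑ k, atp2 s b k ℓ then 0
  else atp2 s b i j

/-- Total bid-constraint cost `C_f(b_i)` of agent `i`'s bid vector. -/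
noncomputable def bidCost {m : ℕ} (f : Fin m → ℝ → ℝ) (bi : Fin m → Bid) : ℝ :=
  ∑ j, f j (bval (bi j))

/-- A bid vector is feasible if it obeys the bid constraint `C_f(b_i) ≤ 1`. -/
def feasibleBid {m : ℕ} (f : Fin m → ℝ → ℝ) (bi : Fin m → Bid) : Prop :=
  bidCost f bi ≤ 1

/-- `b` is a Nash equilibrium of `ATP(f)`: all bids are feasible and no agent can
strictly increase her utility by a unilateral feasible deviation. -/
def isNE {n m : ℕ} (s : Fin m → ℝ) (f : Fin m → ℝ → ℝ)
    (R : Fin n → Finset (Fin m)) (b : Fin n → Fin m → Bid) : Prop :=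
  (∀ i, feasibleBid f (b i)) ∧
    ∀ (i : Fin n) (bi' : Fin m → Bid), feasibleBid f bi' →
      util R (atp s (Function.update b i bi')) i ≤ util R (atp s b) i

/-- `NE_X(ATP(f))`: allocations arising from Nash equilibrium bid profiles. -/
def NEX {n m : ℕ} (s : Fin m → ℝ) (f : Fin m → ℝ → ℝ)
    (R : Fin n → Finset (Fin m)) : Set (Fin n → Fin m → ℝ) :=
  {x | ∃ b, isNE s f R b ∧ x = atp s b}

/-- `f` is homogeneous of degree `α` on the nonnegative reals. -/
def Homog (f : ℝ → ℝ) (α : ℝ) : Prop :=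
  ∀ c ≥ (0 : ℝ), ∀ y ≥ (0 : ℝ), f (c * y) = c ^ α * f y

/-- `γ* = max {γ ≥ 0 : γ · Σ_i w_{ij} ≤ s_j for all j}` of Mechanism 1. -/
noncomputable def gammaStar {n m : ℕ} (s : Fin m → ℝ) (R : Fin n → Finset (Fin m)) : ℝ :=
  sSup {γ : ℝ | 0 ≤ γ ∧ ∀ j, γ * ∑ i, w R i j ≤ s j}

/-- Mechanism 1: `x i j = γ* · w i j`. -/
noncomputable def mech1 {n m : ℕ} (s : Fin m → ℝ) (R : Fin n → Finset (Fin m)) :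
    Fin n → Fin m → ℝ :=
  fun i j => gammaStar s R * w R i j

/-- `min_i u_i(x_i)`. -/
noncomputable def minUtil {n m : ℕ} (R : Fin n → Finset (Fin m))
    (x : Fin n → Fin m → ℝ) : ℝ :=
  sInf (Set.range fun i => util R x i)

/-- `x` is maxmin-optimal: valid and attaining the maximum of `min_i u_i` over valid
allocations. -/
def maxminOptimal {n m : ℕ} (s : Fin m → ℝ) (R : Fin n → Finset (Fin m))
    (x : Fin n → Fin m → ℝ) : Prop :=
  validAlloc s x ∧ ∀ y, validAlloc s y → minUtil R y ≤ minUtil R x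

/-- Mechanism 2: `P i k` is the set agent `i` claims agent `k` desires.
`eta P i = |{k : R_k(k) ≠ R_k(i)}|`. -/
noncomputable def eta {n m : ℕ} (P : Fin n → Fin n → Finset (Fin m)) (i : Fin n) : ℕ :=
  (Finset.univ.filter fun k => P k k ≠ P i k).card

/-- Agent `i` is in `N̄`: for some `k`, `R_k(k) ⊊ R_k(i)`. -/
def inNbar {n m : ℕ} (P : Fin n → Fin n → Finset (Fin m)) (i : Fin n) : Prop :=
  ∃ k, P k k ⊂ P i k

/-- The penalty factor `α_i` of Mechanism 2. -/
noncomputable def alpha {n m : ℕ} (P : Fin n → Fin n → Finset (Fin m)) (i : Fin n) : ℝ :=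
  if inNbar P i then 0 else 1 - (eta P i : ℝ) / n

/-- Effective reported sets of Mechanism 2: agents in `N̄` are replaced by `∅`. -/
noncomputable def effSets {n m : ℕ} (P : Fin n → Fin n → Finset (Fin m)) :
    Fin n → Finset (Fin m) :=
  fun i => if inNbar P i then ∅ else P i i

/-- Mechanism 2: the allocation `x_i = α_i · y_i` where `y` is the Mechanism 1 outcome
on the effective sets. -/
noncomputable def mech2 {n m : ℕ} (s : Fin m → ℝ) (P : Fin n → Fin n → Finset (Fin m)) :
    Fin n → Fin m → ℝ :=
  fun i j => alpha P i * mech1 s (effSets P) i j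


/-! Utilities are bounded by allocated amounts, so for every good the utilities of the agents
desiring it sum to at most its supply; a nonnegative combination of these seven constraints gives
`∑ i, u i ≤ 5/2`, with equality only when every `u i = 1/2`. For `ρ ≤ 1` the CES welfare of `u`
is at most that of the constant vector at the mean of `u` (AM-GM for `ρ ≤ 0`, Jensen for the
concave `t ↦ t ^ ρ` when `0 < ρ`), and CES welfare is strictly increasing along constant vectors.
Since the all-halves allocation is valid, an optimum has mean utility at least `1/2`, so all the
constraints are tight. -/

section Bundle

variable {m : ℕ} {S T : Finset (Fin m)} {xi : Fin m → ℝ}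

lemma bundleUtil_le {j : Fin m} (hj : j ∈ S) : bundleUtil S xi ≤ xi j :=
  csInf_le (S.finite_toSet.image xi).bddBelow ⟨j, hj, rfl⟩

lemma le_bundleUtil {c : ℝ} (hS : S.Nonempty) (h : ∀ j ∈ S, c ≤ xi j) :
    c ≤ bundleUtil S xi := by
  obtain ⟨j, hj⟩ := hS
  exact le_csInf ⟨xi j, j, hj, rfl⟩ (by rintro _ ⟨k, hk, rfl⟩; exact h k hk)

lemma bundleUtil_anti (hS : S.Nonempty) (hST : S ⊆ T) : bundleUtil T xi ≤ bundleUtil S xi :=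
  le_bundleUtil hS fun _ hj => bundleUtil_le (hST hj)

end Bundle

section Allocation

variable {n m : ℕ} {s : Fin m → ℝ} {R : Fin n → Finset (Fin m)} {x : Fin n → Fin m → ℝ}

lemma util_nonneg (hx : validAlloc s x) {i : Fin n} (hR : (R i).Nonempty) : 0 ≤ util R x i :=
  le_bundleUtil hR fun j _ => hx.1 i j

lemma sum_util_le_supply (hx : validAlloc s x) (j : Fin m) :
    ∑ i ∈ Finset.univ with j ∈ R i, util R x i ≤ s j :=
  calc ∑ i ∈ Finset.univ with j ∈ R i, util R x i
      ≤ ∑ i ∈ Finset.univ with j ∈ R i, x i j :=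
        Finset.sum_le_sum fun _ hi => bundleUtil_le (Finset.mem_filter.1 hi).2
    _ ≤ ∑ i, x i j :=
        Finset.sum_le_sum_of_subset_of_nonneg (Finset.filter_subset _ _) fun i _ _ => hx.1 i j
    _ ≤ s j := hx.2 j

end Allocation

section CES

variable {n : ℕ} {ρ : ℝ} {v : Fin n → ℝ}

lemma ces_const (ρ : ℝ) {c : ℝ} (hc : 0 ≤ c) :
    ces ρ (fun _ : Fin n => c) = if ρ = 0 then c ^ n else (n : ℝ) ^ (1 / ρ) * c := by
  unfold ces
  split_ifs with h0 hzero
  · simp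
  · obtain ⟨-, _, rfl⟩ := hzero
    simp
  · rw [Finset.sum_const, Finset.card_univ, Fintype.card_fin, nsmul_eq_mul,
      mul_rpow n.cast_nonneg (rpow_nonneg hc _), ← rpow_mul hc, mul_one_div_cancel h0, rpow_one]

lemma ces_const_strictMonoOn (ρ : ℝ) (hn : n ≠ 0) :
    StrictMonoOn (fun c : ℝ => ces ρ (fun _ : Fin n => c)) (Set.Ici 0) := by
  intro a ha b hb hab
  simp only [ces_const ρ ha, ces_const ρ hb]
  split_ifs
  · exact pow_lt_pow_left₀ hab ha hn
  · exact mul_lt_mul_of_pos_left hab (rpow_pos_of_pos (by positivity) _)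

lemma prod_rpow_inv_le_mean (hn : n ≠ 0) (hv : ∀ i, 0 ≤ v i) :
    ∏ i, v i ^ (n : ℝ)⁻¹ ≤ (∑ i, v i) / n := by
  have h := Real.geom_mean_le_arith_mean_weighted Finset.univ (fun _ => (n : ℝ)⁻¹) v
    (fun _ _ => by positivity) (by simp [hn]) fun i _ => hv i
  rwa [← Finset.mul_sum, inv_mul_eq_div] at h

lemma prod_le_mean_pow (hn : n ≠ 0) (hv : ∀ i, 0 ≤ v i) :
    ∏ i, v i ≤ ((∑ i, v i) / n) ^ n :=
  calc ∏ i, v i = (∏ i, v i ^ (n : ℝ)⁻¹) ^ n := by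
        rw [← Finset.prod_pow]
        refine Finset.prod_congr rfl fun i _ => ?_
        rw [← rpow_natCast, ← rpow_mul (hv i), inv_mul_cancel₀ (by exact_mod_cast hn), rpow_one]
    _ ≤ _ := pow_le_pow_left₀ (Finset.prod_nonneg fun i _ => rpow_nonneg (hv i) _)
        (prod_rpow_inv_le_mean hn hv) n

lemma rpow_sum_rpow_le_of_neg (hn : n ≠ 0) (hρ : ρ < 0) (hv : ∀ i, 0 < v i) :
    (∑ i, v i ^ ρ) ^ (1 / ρ) ≤ (n : ℝ) ^ (1 / ρ) * ((∑ i, v i) / n) := by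
  set G := ∏ i, v i ^ (n : ℝ)⁻¹
  have hG : 0 < G := Finset.prod_pos fun i _ => rpow_pos_of_pos (hv i) _
  have hn' : (0 : ℝ) < n := by positivity
  -- AM-GM applied to the numbers `v i ^ ρ`, whose geometric mean is `G ^ ρ`
  have hGρ : G ^ ρ ≤ (∑ i, v i ^ ρ) / n := by
    convert prod_rpow_inv_le_mean hn fun i => (rpow_pos_of_pos (hv i) ρ).le using 1
    rw [← Real.finsetProd_rpow _ _ fun i _ => rpow_nonneg (hv i).le _]
    refine Finset.prod_congr rfl fun i _ => ?_
    rw [← rpow_mul (hv i).le, ← rpow_mul (hv i).le, mul_comm]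
  calc (∑ i, v i ^ ρ) ^ (1 / ρ) = (n * ((∑ i, v i ^ ρ) / n)) ^ (1 / ρ) := by
        rw [mul_div_cancel₀ _ hn'.ne']
    _ ≤ (n * G ^ ρ) ^ (1 / ρ) :=
        rpow_le_rpow_of_nonpos (by positivity) (by gcongr) (one_div_neg.2 hρ).le
    _ = n ^ (1 / ρ) * G := by
        rw [mul_rpow hn'.le (rpow_nonneg hG.le _), ← rpow_mul hG.le, mul_one_div_cancel hρ.ne,
          rpow_one]
    _ ≤ _ := by gcongr; exact prod_rpow_inv_le_mean hn fun i => (hv i).le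

lemma rpow_sum_rpow_le_of_pos (hn : n ≠ 0) (hρ₀ : 0 < ρ) (hρ₁ : ρ ≤ 1) (hv : ∀ i, 0 ≤ v i) :
    (∑ i, v i ^ ρ) ^ (1 / ρ) ≤ (n : ℝ) ^ (1 / ρ) * ((∑ i, v i) / n) := by
  have hn' : (0 : ℝ) < n := by positivity
  have hmean : 0 ≤ (∑ i, v i) / n := div_nonneg (Finset.sum_nonneg fun i _ => hv i) hn'.le
  have hJensen : ∑ i, (n : ℝ)⁻¹ * v i ^ ρ ≤ ((∑ i, v i) / n) ^ ρ := by
    have h := (Real.concaveOn_rpow hρ₀.le hρ₁).le_map_sum (t := Finset.univ)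
      (w := fun _ => (n : ℝ)⁻¹) (fun _ _ => by positivity) (by simp [hn]) fun i _ => hv i
    rw [div_eq_inv_mul, Finset.mul_sum]
    simpa only [smul_eq_mul] using h
  calc (∑ i, v i ^ ρ) ^ (1 / ρ) = (n * ∑ i, (n : ℝ)⁻¹ * v i ^ ρ) ^ (1 / ρ) := by
        rw [← Finset.mul_sum, mul_inv_cancel_left₀ hn'.ne']
    _ ≤ (n * ((∑ i, v i) / n) ^ ρ) ^ (1 / ρ) := by
        gcongr
        exact mul_nonneg hn'.le
          (Finset.sum_nonneg fun i _ => mul_nonneg (by positivity) (rpow_nonneg (hv i) _))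
    _ = n ^ (1 / ρ) * ((∑ i, v i) / n) := by
        rw [mul_rpow hn'.le (rpow_nonneg hmean _), ← rpow_mul hmean, mul_one_div_cancel hρ₀.ne',
          rpow_one]

lemma ces_le_ces_const_mean (hn : n ≠ 0) (hρ : ρ ≤ 1) (hv : ∀ i, 0 ≤ v i) :
    ces ρ v ≤ ces ρ (fun _ : Fin n => (∑ i, v i) / n) := by
  have hmean : 0 ≤ (∑ i, v i) / n := div_nonneg (Finset.sum_nonneg fun i _ => hv i) n.cast_nonneg
  rw [ces_const ρ hmean]
  unfold ces
  rcases lt_trichotomy ρ 0 with hneg | rfl | hpos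
  · rw [if_neg hneg.ne, if_neg hneg.ne]
    split_ifs with hzero
    · positivity
    · push Not at hzero
      exact rpow_sum_rpow_le_of_neg hn hneg fun i => (hv i).lt_of_ne' (hzero hneg i)
  · simpa only [if_true] using prod_le_mean_pow hn hv
  · rw [if_neg hpos.ne', if_neg hpos.ne', if_neg fun h => hpos.not_gt h.1]
    exact rpow_sum_rpow_le_of_pos hn hpos hρ hv

end CES

noncomputable def lieSupply : Fin 7 → ℝ := fun j => if j = 6 then 2 else 1

def lieSets : Fin 5 → Finset (Fin 7) :=
  ![{0, 1, 6}, {2, 3, 6}, {4, 5, 6}, {0, 2, 4, 6}, {1, 3, 5}]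

noncomputable def halfAlloc : Fin 5 → Fin 7 → ℝ := fun i j => if j ∈ lieSets i then 1 / 2 else 0

lemma lieSets_nonempty (i : Fin 5) : (lieSets i).Nonempty := by
  fin_cases i <;> exact Finset.insert_nonempty _ _

lemma halfAlloc_valid : validAlloc lieSupply halfAlloc := by
  refine ⟨fun i j => by unfold halfAlloc; split_ifs <;> norm_num, fun j => ?_⟩
  fin_cases j <;> simp [Fin.sum_univ_five, halfAlloc, lieSets, lieSupply] <;> norm_num

lemma util_halfAlloc (i : Fin 5) : util lieSets halfAlloc i = 1 / 2 := by
  obtain ⟨j, hj⟩ := lieSets_nonempty i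
  exact le_antisymm ((bundleUtil_le hj).trans_eq (if_pos hj))
    (le_bundleUtil ⟨j, hj⟩ fun k hk => (if_pos hk).ge)

lemma util_lie_eq_half {x : Fin 5 → Fin 7 → ℝ} (hx : validAlloc lieSupply x)
    (hmean : 1 / 2 ≤ (∑ i, util lieSets x i) / 5) : ∀ i, util lieSets x i = 1 / 2 := by
  set u := util lieSets x
  have hcap (j : Fin 7) : ∑ i ∈ Finset.univ with j ∈ lieSets i, u i ≤ lieSupply j :=
    sum_util_le_supply hx j
  have h0 := hcap 0; have h1 := hcap 1; have h2 := hcap 2; have h3 := hcap 3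
  have h4 := hcap 4; have h5 := hcap 5; have h6 := hcap 6
  simp only [Finset.sum_filter, Fin.sum_univ_five] at h0 h1 h2 h3 h4 h5 h6
  simp only [lieSets, lieSupply, Matrix.cons_val,
    Matrix.cons_val_zero, Matrix.cons_val_one, Finset.mem_insert, Finset.mem_singleton,
    Fin.reduceEq, or_false, or_true, ↓reduceIte] at h0 h1 h2 h3 h4 h5 h6
  rw [Fin.sum_univ_five] at hmean
  -- weights 1 on goods 0, 2, 4, weights 2 on goods 1, 3, 5 and weight 3 on good 6
  -- give `6 * ∑ i, u i ≤ 15`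
  have e0 : u 0 = 1 / 2 := by linarith
  have e1 : u 1 = 1 / 2 := by linarith
  have e2 : u 2 = 1 / 2 := by linarith
  have e3 : u 3 = 1 / 2 := by linarith
  have e4 : u 4 = 1 / 2 := by linarith
  intro i
  fin_cases i
  exacts [e0, e1, e2, e3, e4]

/-- Lemma lie: in the instance where agent 4 (index 3) reports
`R'_4 = {1,3,5,7}` (indices {0,2,4,6}), for every `ρ ≤ 1`, every CES-welfare-maximizing
allocation gives every agent reported utility exactly 1/2; in particular agent 4's true
utility `min_{j ∈ {0,2,4}} x_{4j}` is at least 1/2. -/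
theorem lie_ge_half (ρ : ℝ) (hρ : ρ ≤ 1) (x : Fin 5 → Fin 7 → ℝ)
    (hx : maxCES ρ (fun j => if j = (6 : Fin 7) then 2 else 1)
      (![{0, 1, 6}, {2, 3, 6}, {4, 5, 6}, {0, 2, 4, 6}, {1, 3, 5}] :
        Fin 5 → Finset (Fin 7)) x) :
    (∀ i, util (![{0, 1, 6}, {2, 3, 6}, {4, 5, 6}, {0, 2, 4, 6}, {1, 3, 5}] :
        Fin 5 → Finset (Fin 7)) x i = 1 / 2) ∧
      1 / 2 ≤ bundleUtil ({0, 2, 4} : Finset (Fin 7)) (x 3) := by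
  change maxCES ρ lieSupply lieSets x at hx
  have hu : ∀ i, 0 ≤ util lieSets x i := fun i => util_nonneg hx.1 (lieSets_nonempty i)
  have hmean : 1 / 2 ≤ (∑ i, util lieSets x i) / 5 := by
    have hopt := hx.2 halfAlloc halfAlloc_valid
    rw [funext util_halfAlloc] at hopt
    have hmono := ces_const_strictMonoOn (n := 5) ρ (by norm_num)
    exact_mod_cast (hmono.le_iff_le (by norm_num)
      (div_nonneg (Finset.sum_nonneg fun i _ => hu i) (Nat.cast_nonneg 5))).1
      (hopt.trans (ces_le_ces_const_mean (by norm_num) hρ hu))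
  have hhalf := util_lie_eq_half hx.1 hmean
  refine ⟨hhalf, ?_⟩
  calc (1 : ℝ) / 2 = util lieSets x 3 := (hhalf 3).symm
    _ ≤ _ := bundleUtil_anti (by decide) (by decide)

end BandwidthAlloc
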